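/- The Fixed mechanism is (1 − √2/2)-approximate for the Utilitarian and Happiness objectives: let z_f = 1 − √2/2 and y_f = (z_f·ℓ, (1 − z_f)·ℓ). For every agent with location x ∈ [0, ℓ] and preferences t ∈ {−1,0,1}², u(x, t, y_f) ≥ z_f · sup_{y∈[0,ℓ]²} u(x, t, y). Consequently, for every profile of n ≥ 1 agents: (Utilitarian) Σ_i u(x_i, t_i, y_f) ≥ z_f · sup_{y∈[0,ℓ]²} Σ_i u(x_i, t_i, y); and (Happiness) min_i u(x_i, t_i, y_f)/u_i* ≥ z_f · sup_{y∈[0,ℓ]²} min_i u(x_i, t_i, y)/u_i*, where u_i* = sup_{y∈[0,ℓ]²} u(x_i, t_i, y) (which satisfies u_i* ≥ ℓ > 0). -/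
import Mathlib
set_option maxHeartbeats 0


/-- Utility an agent at `x` with preference `t` for a single facility at `yj`
(segment `[0,ℓ]`): distance if `t = -1`, constant `ℓ` if `t = 0`, `ℓ` minus
distance if `t = 1`. -/
noncomputable def uj (ℓ x : ℝ) (t : ℤ) (yj : ℝ) : ℝ :=
  if t = -1 then |x - yj| else if t = 0 then ℓ else ℓ - |x - yj|

/-- Total utility of an agent at `x` with preference vector `t` for two
facilities placed at `y = (y₁, y₂)`. -/
noncomputable def u2 (ℓ x : ℝ) (t : ℤ × ℤ) (y : ℝ × ℝ) : ℝ :=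
  uj ℓ x t.1 y.1 + uj ℓ x t.2 y.2

/-- Preference vectors with both coordinates in `{-1, 0, 1}`. -/
def validPref : Set (ℤ × ℤ) :=
  {p | (p.1 = -1 ∨ p.1 = 0 ∨ p.1 = 1) ∧ (p.2 = -1 ∨ p.2 = 0 ∨ p.2 = 1)}

/-- Admissible pairs of facility locations: `[0,ℓ]²`. -/
def box (ℓ : ℝ) : Set (ℝ × ℝ) := Set.Icc 0 ℓ ×ˢ Set.Icc 0 ℓ

noncomputable def sval (ℓ x : ℝ) (t : ℤ) : ℝ := if t = -1 then max x (ℓ - x) else ℓ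

lemma uj_le {ℓ x yj : ℝ} (hx : x ∈ Set.Icc 0 ℓ) (hy : yj ∈ Set.Icc 0 ℓ) (t : ℤ) :
    uj ℓ x t yj ≤ sval ℓ x t := by
  obtain ⟨hx0, hxl⟩ := hx; obtain ⟨hy0, hyl⟩ := hy
  unfold uj sval
  split_ifs
  · rcases abs_cases (x - yj) with ⟨h, _⟩ | ⟨h, _⟩ <;> rw [h]
    · exact le_max_of_le_left (by linarith)
    · exact le_max_of_le_right (by linarith)
  · exact le_refl _
  · linarith [abs_nonneg (x - yj)]

lemma uj_nonneg {ℓ x yj : ℝ} (hx : x ∈ Set.Icc 0 ℓ) (hy : yj ∈ Set.Icc 0 ℓ) (t : ℤ) :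
    0 ≤ uj ℓ x t yj := by
  obtain ⟨hx0, hxl⟩ := hx; obtain ⟨hy0, hyl⟩ := hy
  unfold uj
  split_ifs
  · exact abs_nonneg _
  · linarith
  · rcases abs_cases (x - yj) with ⟨h, _⟩ | ⟨h, _⟩ <;> rw [h] <;> linarith

lemma sval_half {ℓ x : ℝ} (hx : x ∈ Set.Icc 0 ℓ) (t : ℤ) : ℓ / 2 ≤ sval ℓ x t := by
  obtain ⟨hx0, hxl⟩ := hx
  unfold sval
  split_ifs
  · rcases max_cases x (ℓ - x) with ⟨h, h'⟩ | ⟨h, h'⟩ <;> rw [h] <;> linarith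
  · linarith

lemma u2_le {ℓ x : ℝ} {y : ℝ × ℝ} (hx : x ∈ Set.Icc 0 ℓ) (hy : y ∈ box ℓ) (t : ℤ × ℤ) :
    u2 ℓ x t y ≤ sval ℓ x t.1 + sval ℓ x t.2 :=
  add_le_add (uj_le hx hy.1 _) (uj_le hx hy.2 _)

lemma u2_nonneg {ℓ x : ℝ} {y : ℝ × ℝ} (hx : x ∈ Set.Icc 0 ℓ) (hy : y ∈ box ℓ) (t : ℤ × ℤ) :
    0 ≤ u2 ℓ x t y :=
  add_nonneg (uj_nonneg hx hy.1 _) (uj_nonneg hx hy.2 _)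

lemma exists_opt_j {ℓ x : ℝ} (hℓ' : 0 < ℓ) (hx : x ∈ Set.Icc 0 ℓ) {t : ℤ} (ht : t = -1 ∨ t = 0 ∨ t = 1) :
    ∃ yj ∈ Set.Icc 0 ℓ, uj ℓ x t yj = sval ℓ x t := by
  obtain ⟨hx0, hxl⟩ := hx
  rcases ht with rfl | rfl | rfl
  · rcases le_total x (ℓ - x) with h | h
    · exact ⟨ℓ, ⟨le_of_lt hℓ', le_refl _⟩,
        by simp [uj, sval, abs_of_nonpos (by linarith : x - ℓ ≤ 0), max_eq_right h]⟩
    · exact ⟨0, ⟨le_refl _, by linarith⟩,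
        by simp [uj, sval, sub_zero, abs_of_nonneg hx0, max_eq_left h]⟩
  · exact ⟨0, ⟨le_refl _, by linarith⟩, by simp [uj, sval]⟩
  · exact ⟨x, ⟨hx0, hxl⟩, by simp [uj, sval]⟩

lemma sup_eq {ℓ x : ℝ} (hℓ : 0 < ℓ) (hx : x ∈ Set.Icc 0 ℓ) {t : ℤ × ℤ} (ht : t ∈ validPref) :
    (⨆ y ∈ box ℓ, u2 ℓ x t y) = sval ℓ x t.1 + sval ℓ x t.2 := by
  have hS0 : 0 ≤ sval ℓ x t.1 + sval ℓ x t.2 := by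
    have := sval_half hx t.1; have := sval_half hx t.2; linarith
  apply le_antisymm
  · exact Real.iSup_le (fun y => Real.iSup_le (fun hy => u2_le hx hy t) hS0) hS0
  · obtain ⟨y1, hy1, e1⟩ := exists_opt_j hℓ hx ht.1
    obtain ⟨y2, hy2, e2⟩ := exists_opt_j hℓ hx ht.2
    have hmem : (y1, y2) ∈ box ℓ := ⟨hy1, hy2⟩
    have hval : u2 ℓ x t (y1, y2) = sval ℓ x t.1 + sval ℓ x t.2 := by
      simp [u2, e1, e2]
    have hbdd : BddAbove (Set.range fun y => ⨆ _ : y ∈ box ℓ, u2 ℓ x t y) := by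
      refine ⟨sval ℓ x t.1 + sval ℓ x t.2, ?_⟩
      rintro _ ⟨y, rfl⟩
      exact Real.iSup_le (fun hy => u2_le hx hy t) hS0
    calc sval ℓ x t.1 + sval ℓ x t.2 = ⨆ _ : (y1, y2) ∈ box ℓ, u2 ℓ x t (y1, y2) := by
          rw [ciSup_pos hmem, hval]
      _ ≤ ⨆ y, ⨆ _ : y ∈ box ℓ, u2 ℓ x t y := le_ciSup hbdd _

lemma key2 {ℓ x : ℝ} (hℓ : 0 < ℓ) (hx : x ∈ Set.Icc 0 ℓ) {t : ℤ × ℤ} (ht : t ∈ validPref) :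
    (1 - Real.sqrt 2 / 2) * (sval ℓ x t.1 + sval ℓ x t.2) ≤
      u2 ℓ x t ((1 - Real.sqrt 2 / 2) * ℓ, (1 - (1 - Real.sqrt 2 / 2)) * ℓ) := by
  obtain ⟨h1, h2⟩ := ht
  obtain ⟨hx0, hxl⟩ := hx
  set s := Real.sqrt 2 with hs
  have hsq : s * s = 2 := Real.mul_self_sqrt (by norm_num)
  have hs0 : 0 ≤ s := Real.sqrt_nonneg 2
  have hs1 : 1 < s := by nlinarith
  have hs2 : s < 3 / 2 := by nlinarith
  obtain ⟨t1, t2⟩ := t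
  simp only at h1 h2
  rcases h1 with rfl | rfl | rfl <;> rcases h2 with rfl | rfl | rfl <;>
    simp only [u2, uj, sval] <;> norm_num <;>
    rcases abs_cases (x - (1 - s / 2) * ℓ) with ⟨A1, A1'⟩ | ⟨A1, A1'⟩ <;>
    rcases abs_cases (x - s / 2 * ℓ) with ⟨A2, A2'⟩ | ⟨A2, A2'⟩ <;>
    rcases max_cases x (ℓ - x) with ⟨M, M'⟩ | ⟨M, M'⟩ <;>
    nlinarith [hsq, hs1, hs2, hx0, hxl, hℓ, A1, A2, M, mul_pos hℓ hℓ]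

/-- the `Fixed` mechanism, which always outputs
`y_f = (z_f·ℓ, (1-z_f)·ℓ)` with `z_f = 1 - √2/2`, is `z_f`-approximate for
every single agent, and hence for the Utilitarian and the Happiness
objectives. -/
theorem fixed_utilitarian_happiness_approx (ℓ : ℝ) (hℓ : 0 < ℓ) :
    -- per-agent guarantee
    (∀ x ∈ Set.Icc 0 ℓ, ∀ t ∈ validPref,
      (1 - Real.sqrt 2 / 2) * (⨆ y ∈ box ℓ, u2 ℓ x t y) ≤
        u2 ℓ x t ((1 - Real.sqrt 2 / 2) * ℓ, (1 - (1 - Real.sqrt 2 / 2)) * ℓ)) ∧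
    -- Utilitarian
    (∀ n : ℕ, 0 < n → ∀ x : Fin n → ℝ, ∀ t : Fin n → ℤ × ℤ,
      (∀ i, x i ∈ Set.Icc 0 ℓ) → (∀ i, t i ∈ validPref) →
      (1 - Real.sqrt 2 / 2) * (⨆ y ∈ box ℓ, ∑ i, u2 ℓ (x i) (t i) y) ≤
        ∑ i, u2 ℓ (x i) (t i)
          ((1 - Real.sqrt 2 / 2) * ℓ, (1 - (1 - Real.sqrt 2 / 2)) * ℓ)) ∧
    -- Happiness
    (∀ n : ℕ, 0 < n → ∀ x : Fin n → ℝ, ∀ t : Fin n → ℤ × ℤ,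
      (∀ i, x i ∈ Set.Icc 0 ℓ) → (∀ i, t i ∈ validPref) →
      (1 - Real.sqrt 2 / 2) *
          (⨆ y ∈ box ℓ, ⨅ i,
            u2 ℓ (x i) (t i) y / (⨆ y' ∈ box ℓ, u2 ℓ (x i) (t i) y')) ≤
        ⨅ i, u2 ℓ (x i) (t i)
              ((1 - Real.sqrt 2 / 2) * ℓ, (1 - (1 - Real.sqrt 2 / 2)) * ℓ) /
            (⨆ y' ∈ box ℓ, u2 ℓ (x i) (t i) y')) := by
  have hsq : Real.sqrt 2 * Real.sqrt 2 = 2 := Real.mul_self_sqrt (by norm_num)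
  have hs0 : 0 ≤ Real.sqrt 2 := Real.sqrt_nonneg 2
  have hz0 : (0:ℝ) ≤ 1 - Real.sqrt 2 / 2 := by nlinarith
  refine ⟨?_, ?_, ?_⟩
  · intro x hx t ht
    rw [sup_eq hℓ hx ht]
    exact key2 hℓ hx ht
  · intro n hn x t hx ht
    have hS0 : 0 ≤ ∑ i, (sval ℓ (x i) (t i).1 + sval ℓ (x i) (t i).2) :=
      Finset.sum_nonneg fun i _ => by
        have h1 := sval_half (hx i) (t i).1
        have h2 := sval_half (hx i) (t i).2
        linarith
    have hsup : (⨆ y ∈ box ℓ, ∑ i, u2 ℓ (x i) (t i) y) ≤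
        ∑ i, (sval ℓ (x i) (t i).1 + sval ℓ (x i) (t i).2) :=
      Real.iSup_le (fun y => Real.iSup_le
        (fun hy => Finset.sum_le_sum fun i _ => u2_le (hx i) hy _) hS0) hS0
    calc (1 - Real.sqrt 2 / 2) * (⨆ y ∈ box ℓ, ∑ i, u2 ℓ (x i) (t i) y)
        ≤ (1 - Real.sqrt 2 / 2) * ∑ i, (sval ℓ (x i) (t i).1 + sval ℓ (x i) (t i).2) :=
          mul_le_mul_of_nonneg_left hsup hz0
      _ = ∑ i, (1 - Real.sqrt 2 / 2) * (sval ℓ (x i) (t i).1 + sval ℓ (x i) (t i).2) :=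
          Finset.mul_sum _ _ _
      _ ≤ ∑ i, u2 ℓ (x i) (t i)
            ((1 - Real.sqrt 2 / 2) * ℓ, (1 - (1 - Real.sqrt 2 / 2)) * ℓ) :=
          Finset.sum_le_sum fun i _ => key2 hℓ (hx i) (ht i)
  · intro n hn x t hx ht
    haveI : Nonempty (Fin n) := ⟨⟨0, hn⟩⟩
    have hU : ∀ i, (⨆ y' ∈ box ℓ, u2 ℓ (x i) (t i) y') =
        sval ℓ (x i) (t i).1 + sval ℓ (x i) (t i).2 := fun i => sup_eq hℓ (hx i) (ht i)
    simp only [hU]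
    have hSpos : ∀ i, 0 < sval ℓ (x i) (t i).1 + sval ℓ (x i) (t i).2 := fun i => by
      have h1 := sval_half (hx i) (t i).1
      have h2 := sval_half (hx i) (t i).2
      linarith
    have hsup1 : (⨆ y ∈ box ℓ, ⨅ i,
        u2 ℓ (x i) (t i) y / (sval ℓ (x i) (t i).1 + sval ℓ (x i) (t i).2)) ≤ 1 := by
      refine Real.iSup_le (fun y => Real.iSup_le (fun hy => ?_) zero_le_one) zero_le_one
      have hbdd : BddBelow (Set.range fun i =>
          u2 ℓ (x i) (t i) y / (sval ℓ (x i) (t i).1 + sval ℓ (x i) (t i).2)) := by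
        refine ⟨0, ?_⟩
        rintro _ ⟨i, rfl⟩
        exact div_nonneg (u2_nonneg (hx i) hy _) (hSpos i).le
      refine le_trans (ciInf_le hbdd (Classical.arbitrary (Fin n))) ?_
      rw [div_le_one (hSpos _)]
      exact u2_le (hx _) hy _
    calc (1 - Real.sqrt 2 / 2) * (⨆ y ∈ box ℓ, ⨅ i,
          u2 ℓ (x i) (t i) y / (sval ℓ (x i) (t i).1 + sval ℓ (x i) (t i).2))
        ≤ (1 - Real.sqrt 2 / 2) * 1 := mul_le_mul_of_nonneg_left hsup1 hz0
      _ = 1 - Real.sqrt 2 / 2 := mul_one _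
      _ ≤ ⨅ i, u2 ℓ (x i) (t i)
              ((1 - Real.sqrt 2 / 2) * ℓ, (1 - (1 - Real.sqrt 2 / 2)) * ℓ) /
            (sval ℓ (x i) (t i).1 + sval ℓ (x i) (t i).2) := by
          refine le_ciInf fun i => ?_
          rw [le_div_iff₀ (hSpos i)]
          exact key2 hℓ (hx i) (ht i)
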